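/- arXiv:math/0105013 — 4 statements merged into one kernel-verified Lean document; each statement's English description precedes it below -/
import Mathlib

section
/- Let a, λ > 0 and define u(x) = λx on Ω = (0,a). Then u is a Dirichlet minimizer of the one-dimensional Mumford–Shah functional F_0 (among piecewise C^1 functions v on (0,a) with finitely many jump points and v(0⁺)=0, v(a⁻)=λa) if and only if aλ² ≤ 1. -/
open MeasureTheory ENNReal

/-- The one-dimensional homogeneous Mumford–Shah energy of a function `v` on `(0,a)`
with (finite) jump set `S`: `∫_{(0,a)} |v'|² dx + #S`, valued in `[0,∞]`. -/
noncomputable def msEnergy (a : ℝ) (v : ℝ → ℝ) (S : Finset ℝ) : ℝ≥0∞ :=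
  (∫⁻ x in Set.Ioo 0 a, ENNReal.ofReal ((deriv v x)^2)) + S.card

/-- `v` is piecewise `C¹` on `(0,a)` with jump set `S ⊂ (0,a)` and one-sided
boundary values `b₀` at `0⁺` and `b₁` at `a⁻`. -/
def msAdmissible (a : ℝ) (v : ℝ → ℝ) (S : Finset ℝ) (b₀ b₁ : ℝ) : Prop :=
  ↑S ⊆ Set.Ioo 0 a ∧
  (∀ x ∈ Set.Ioo 0 a \ S, DifferentiableAt ℝ v x) ∧
  ContinuousOn (deriv v) (Set.Ioo 0 a \ S) ∧
  Filter.Tendsto v (nhdsWithin 0 (Set.Ioi 0)) (nhds b₀) ∧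
  Filter.Tendsto v (nhdsWithin a (Set.Iio a)) (nhds b₁)


open Set intervalIntegral

lemma key_lemma (a lam : ℝ) (ha : 0 < a) (hlam : 0 < lam) (v : ℝ → ℝ)
    (hdiff : ∀ x ∈ Set.Ioo 0 a, DifferentiableAt ℝ v x)
    (hcont : ContinuousOn (deriv v) (Set.Ioo 0 a))
    (h0 : Filter.Tendsto v (nhdsWithin 0 (Set.Ioi 0)) (nhds 0))
    (h1 : Filter.Tendsto v (nhdsWithin a (Set.Iio a)) (nhds (lam * a))) :
    ENNReal.ofReal (lam^2) * ENNReal.ofReal a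
      ≤ ∫⁻ x in Set.Ioo 0 a, ENNReal.ofReal ((deriv v x)^2) := by
  set f : ℝ → ℝ := deriv v with hf
  set I : ℝ≥0∞ := ∫⁻ x in Set.Ioo 0 a, ENNReal.ofReal ((f x)^2) with hI
  by_cases hItop : I = ⊤
  · rw [hItop]; exact le_top
  -- measurability
  have hmeas : AEMeasurable f (volume.restrict (Ioo 0 a)) :=
    (hcont.aemeasurable measurableSet_Ioo)
  have hmeas2 : AEMeasurable (fun x => (f x)^2) (volume.restrict (Ioo 0 a)) :=
    (hmeas.mul hmeas).congr (by filter_upwards with x using by rw [Pi.mul_apply, sq])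
  -- integrability of f^2 on Ioo
  have hint2 : IntegrableOn (fun x => (f x)^2) (Ioo 0 a) := by
    refine ⟨hmeas2.aestronglyMeasurable, ?_⟩
    rw [hasFiniteIntegral_iff_norm]
    have : (∫⁻ x in Ioo 0 a, ENNReal.ofReal ‖(f x)^2‖) = I := by
      refine lintegral_congr fun x => by rw [Real.norm_eq_abs, abs_of_nonneg (sq_nonneg _)]
    rw [this]; exact lt_top_iff_ne_top.mpr hItop
  -- integrability of f on Ioo (|f| ≤ f^2 + 1)
  have hint1 : IntegrableOn f (Ioo 0 a) := by
    refine ⟨hmeas.aestronglyMeasurable, ?_⟩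
    refine (hasFiniteIntegral_iff_norm f).mpr ?_
    have hb : (∫⁻ x in Ioo 0 a, ENNReal.ofReal ‖f x‖)
        ≤ ∫⁻ x in Ioo 0 a, (ENNReal.ofReal ((f x)^2) + 1) := by
      refine lintegral_mono fun x => ?_
      have h1 : ‖f x‖ ≤ (f x)^2 + 1 := by
        rw [Real.norm_eq_abs]
        nlinarith [sq_abs (f x), abs_nonneg (f x), sq_nonneg (|f x| - 1)]
      calc ENNReal.ofReal ‖f x‖ ≤ ENNReal.ofReal ((f x)^2 + 1) := ENNReal.ofReal_le_ofReal h1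
        _ ≤ ENNReal.ofReal ((f x)^2) + 1 := by
            rw [← ENNReal.ofReal_one]; exact ENNReal.ofReal_add_le
    refine lt_of_le_of_lt hb ?_
    rw [lintegral_add_right _ measurable_const, lintegral_one, Measure.restrict_apply_univ]
    exact ENNReal.add_lt_top.mpr ⟨lt_top_iff_ne_top.mpr hItop, by simp [Real.volume_Ioo]⟩
  have hintIcc : IntegrableOn f (Icc 0 a) :=
    hint1.congr_set_ae (Ioo_ae_eq_Icc (μ := volume) (a := (0:ℝ)) (b := a)).symm
  -- the primitive
  set G : ℝ → ℝ := fun y => ∫ t in (0:ℝ)..y, f t with hG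
  have huIcc : uIcc (0:ℝ) a = Icc 0 a := uIcc_of_le ha.le
  have hGcont : ContinuousOn G (Icc 0 a) := by
    have := continuousOn_primitive_interval' (μ := volume) (f := f) (b₁ := (0:ℝ)) (b₂ := a)
      (a := (0:ℝ)) ?_ ?_
    · rwa [huIcc] at this
    · rw [intervalIntegrable_iff_integrableOn_Ioc_of_le ha.le]
      exact hintIcc.mono_set Ioc_subset_Icc_self
    · rw [huIcc]; exact ⟨le_refl _, ha.le⟩
  -- FTC between points of Ioo
  have hOrd : OrdConnected (Ioo (0:ℝ) a) := ordConnected_Ioo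
  have hFTC : ∀ x ∈ Ioo (0:ℝ) a, ∀ y ∈ Ioo (0:ℝ) a, v y - v x = G y - G x := by
    intro x hx y hy
    have hsub : uIcc x y ⊆ Ioo 0 a := hOrd.uIcc_subset hx hy
    have hii : IntervalIntegrable f volume x y :=
      (hint1.mono_set hsub).intervalIntegrable
    have h1 : ∫ t in x..y, f t = v y - v x := by
      refine integral_deriv_eq_sub (fun z hz => hdiff z (hsub hz)) hii
    have h2 : ∫ t in x..y, f t = G y - G x := by
      have hx' : IntervalIntegrable f volume 0 x := by
        rw [intervalIntegrable_iff_integrableOn_Ioc_of_le hx.1.le]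
        exact hintIcc.mono_set (Ioc_subset_Icc_self.trans (Icc_subset_Icc le_rfl hx.2.le))
      have hy' : IntervalIntegrable f volume 0 y := by
        rw [intervalIntegrable_iff_integrableOn_Ioc_of_le hy.1.le]
        exact hintIcc.mono_set (Ioc_subset_Icc_self.trans (Icc_subset_Icc le_rfl hy.2.le))
      rw [hG]
      exact (integral_interval_sub_left hy' hx').symm
    rw [← h1, h2]
  -- identify G a = lam * a  via limits
  have hmem : a/2 ∈ Ioo (0:ℝ) a := ⟨half_pos ha, half_lt_self ha⟩
  set C : ℝ := v (a/2) - G (a/2) with hC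
  have hconst : ∀ y ∈ Ioo (0:ℝ) a, v y - G y = C := by
    intro y hy
    have := hFTC (a/2) hmem y hy
    rw [hC]; linarith
  have hlim_a : Filter.Tendsto (fun y => v y - G y) (nhdsWithin a (Ioo 0 a))
      (nhds (lam * a - G a)) := by
    refine Filter.Tendsto.sub (h1.mono_left ?_) ?_
    · rw [nhdsWithin_Ioo_eq_nhdsLT ha]
    · exact (hGcont a (right_mem_Icc.mpr ha.le)).mono Ioo_subset_Icc_self
  have hlim_0 : Filter.Tendsto (fun y => v y - G y) (nhdsWithin 0 (Ioo 0 a))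
      (nhds (0 - G 0)) := by
    refine Filter.Tendsto.sub (h0.mono_left ?_) ?_
    · rw [nhdsWithin_Ioo_eq_nhdsGT ha]
    · exact (hGcont 0 (left_mem_Icc.mpr ha.le)).mono Ioo_subset_Icc_self
  have hconst_a : Filter.Tendsto (fun y => v y - G y) (nhdsWithin a (Ioo 0 a)) (nhds C) := by
    refine Filter.Tendsto.congr' ?_ tendsto_const_nhds
    filter_upwards [self_mem_nhdsWithin] with y hy using (hconst y hy).symm
  have hconst_0 : Filter.Tendsto (fun y => v y - G y) (nhdsWithin 0 (Ioo 0 a)) (nhds C) := by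
    refine Filter.Tendsto.congr' ?_ tendsto_const_nhds
    filter_upwards [self_mem_nhdsWithin] with y hy using (hconst y hy).symm
  haveI : (nhdsWithin a (Ioo 0 a)).NeBot := by
    rw [nhdsWithin_Ioo_eq_nhdsLT ha]; infer_instance
  haveI : (nhdsWithin (0:ℝ) (Ioo 0 a)).NeBot := by
    rw [nhdsWithin_Ioo_eq_nhdsGT ha]; infer_instance
  have hCa : C = lam * a - G a := tendsto_nhds_unique hconst_a hlim_a
  have hC0 : C = 0 - G 0 := tendsto_nhds_unique hconst_0 hlim_0
  have hG0 : G 0 = 0 := by simp [hG]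
  have hGa : G a = lam * a := by rw [hG0] at hC0; rw [hC0] at hCa; linarith
  -- G a = ∫ over Ioo
  have hGa' : ∫ x in Ioo 0 a, f x = lam * a := by
    rw [← hGa]
    show ∫ x in Ioo 0 a, f x = ∫ t in (0:ℝ)..a, f t
    rw [intervalIntegral.integral_of_le ha.le, integral_Ioc_eq_integral_Ioo]
  -- Cauchy--Schwarz
  have hcs : lam * a ≤ Real.sqrt (∫ x in Ioo 0 a, (f x)^2) * Real.sqrt a := by
    have habs : lam * a ≤ ∫ x in Ioo 0 a, |f x| := by
      calc lam * a = ∫ x in Ioo 0 a, f x := hGa'.symm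
        _ ≤ |∫ x in Ioo 0 a, f x| := le_abs_self _
        _ ≤ ∫ x in Ioo 0 a, |f x| := by
            simpa [Real.norm_eq_abs] using
              norm_integral_le_integral_norm (μ := volume.restrict (Ioo 0 a)) f
    refine habs.trans ?_
    have hpq : (2:ℝ).HolderConjugate 2 := by constructor <;> norm_num
    have hL2 : MemLp f 2 (volume.restrict (Ioo 0 a)) := by
      refine (memLp_two_iff_integrable_sq hmeas.aestronglyMeasurable).mpr hint2
    haveI : IsFiniteMeasure (volume.restrict (Ioo (0:ℝ) a)) := by
      constructor
      rw [Measure.restrict_apply_univ]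
      simp [Real.volume_Ioo]
    have hh := integral_mul_le_Lp_mul_Lq_of_nonneg (μ := volume.restrict (Ioo 0 a)) hpq
      (f := fun x => |f x|) (g := fun _ => (1:ℝ))
      (Filter.Eventually.of_forall fun x => abs_nonneg _)
      (Filter.Eventually.of_forall fun x => zero_le_one)
      (by rw [ENNReal.ofReal_ofNat]; exact hL2.abs)
      (by exact memLp_const 1)
    simp only [mul_one] at hh
    refine hh.trans (le_of_eq ?_)
    have e1 : (∫ x in Ioo 0 a, |f x| ^ (2:ℝ)) = ∫ x in Ioo 0 a, (f x)^2 := by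
      refine integral_congr_ae (Filter.Eventually.of_forall fun x => ?_)
      show |f x| ^ (2:ℝ) = f x ^ 2
      rw [Real.rpow_two, sq_abs]
    have e2 : (∫ _x in Ioo 0 a, (1:ℝ) ^ (2:ℝ)) = a := by
      simp [Real.volume_Ioo, ENNReal.toReal_ofReal ha.le, ha.le]
    rw [e1, e2, Real.sqrt_eq_rpow, Real.sqrt_eq_rpow]
  -- conclude
  have hnn : 0 ≤ ∫ x in Ioo 0 a, (f x)^2 :=
    integral_nonneg fun x => sq_nonneg _
  have hfinal : lam^2 * a ≤ ∫ x in Ioo 0 a, (f x)^2 := by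
    have hsq : (lam * a)^2 ≤ (∫ x in Ioo 0 a, (f x)^2) * a := by
      have := mul_self_le_mul_self (by positivity : (0:ℝ) ≤ lam * a) hcs
      calc (lam*a)^2 = (lam*a)*(lam*a) := sq (lam*a)
        _ ≤ (Real.sqrt (∫ x in Ioo 0 a, (f x)^2) * Real.sqrt a)
            * (Real.sqrt (∫ x in Ioo 0 a, (f x)^2) * Real.sqrt a) := this
        _ = (∫ x in Ioo 0 a, (f x)^2) * a := by
            rw [mul_mul_mul_comm, Real.mul_self_sqrt hnn, Real.mul_self_sqrt ha.le]
    nlinarith [sq_nonneg lam]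
  have hIeq : I = ENNReal.ofReal (∫ x in Ioo 0 a, (f x)^2) := by
    rw [hI, ← ofReal_integral_eq_lintegral_ofReal hint2
      (Filter.Eventually.of_forall fun x => sq_nonneg _)]
  rw [hIeq, ← ENNReal.ofReal_mul (sq_nonneg lam)]
  exact ENNReal.ofReal_le_ofReal hfinal



noncomputable def stepv (a lam : ℝ) : ℝ → ℝ := fun x => if x < a/2 then 0 else lam * a

lemma stepv_deriv_eq_zero (a lam : ℝ) {x : ℝ} (hx : x ≠ a/2) : deriv (stepv a lam) x = 0 := by
  rcases lt_or_gt_of_ne hx with h | h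
  · have hev : stepv a lam =ᶠ[nhds x] fun _ => (0:ℝ) := by
      filter_upwards [Iio_mem_nhds h] with y hy
      simp only [stepv, if_pos (mem_Iio.mp hy)]
    rw [hev.deriv_eq]; simp
  · have hev : stepv a lam =ᶠ[nhds x] fun _ => lam * a := by
      filter_upwards [Ioi_mem_nhds h] with y hy
      simp [stepv, not_lt_of_gt (mem_Ioi.mp hy)]
    rw [hev.deriv_eq]; simp

lemma stepv_admissible (a lam : ℝ) (ha : 0 < a) :
    (↑({a/2} : Finset ℝ) ⊆ Set.Ioo 0 a) ∧
    (∀ x ∈ Set.Ioo 0 a \ ({a/2} : Finset ℝ), DifferentiableAt ℝ (stepv a lam) x) ∧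
    ContinuousOn (deriv (stepv a lam)) (Set.Ioo 0 a \ ({a/2} : Finset ℝ)) ∧
    Filter.Tendsto (stepv a lam) (nhdsWithin 0 (Set.Ioi 0)) (nhds 0) ∧
    Filter.Tendsto (stepv a lam) (nhdsWithin a (Set.Iio a)) (nhds (lam * a)) := by
  have h2 : 0 < a/2 := half_pos ha
  have h2a : a/2 < a := half_lt_self ha
  refine ⟨?_, ?_, ?_, ?_, ?_⟩
  · simp only [Finset.coe_singleton, singleton_subset_iff, mem_Ioo]
    exact ⟨h2, h2a⟩
  · rintro x ⟨hx, hxne⟩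
    simp only [Finset.coe_singleton, mem_singleton_iff] at hxne
    rcases lt_or_gt_of_ne hxne with h | h
    · have hev : stepv a lam =ᶠ[nhds x] fun _ => (0:ℝ) := by
        filter_upwards [Iio_mem_nhds h] with y hy; simp only [stepv, if_pos (mem_Iio.mp hy)]
      exact hev.differentiableAt_iff.mpr (differentiableAt_const _)
    · have hev : stepv a lam =ᶠ[nhds x] fun _ => lam * a := by
        filter_upwards [Ioi_mem_nhds h] with y hy; simp [stepv, not_lt_of_gt (mem_Ioi.mp hy)]
      exact hev.differentiableAt_iff.mpr (differentiableAt_const _)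
  · refine (continuousOn_const (c := (0:ℝ))).congr ?_
    rintro x ⟨hx, hxne⟩
    simp only [Finset.coe_singleton, mem_singleton_iff] at hxne
    exact stepv_deriv_eq_zero a lam hxne
  · refine Filter.Tendsto.congr' ?_ tendsto_const_nhds
    filter_upwards [nhdsWithin_le_nhds (Iio_mem_nhds h2)] with y hy
    exact (if_pos (mem_Iio.mp hy)).symm
  · refine Filter.Tendsto.congr' ?_ tendsto_const_nhds
    filter_upwards [nhdsWithin_le_nhds (Ioi_mem_nhds h2a)] with y hy
    exact (if_neg (not_lt_of_gt (mem_Ioi.mp hy))).symm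

lemma stepv_lintegral (a lam : ℝ) (ha : 0 < a) :
    (∫⁻ x in Set.Ioo 0 a, ENNReal.ofReal ((deriv (stepv a lam) x)^2)) = 0 := by
  have hae : ∀ᵐ x ∂(volume.restrict (Set.Ioo 0 a)), x ≠ a/2 := by
    refine ae_iff.mpr ?_
    have : {x : ℝ | ¬ x ≠ a/2} = {a/2} := by ext x; simp
    rw [this]
    exact le_antisymm ((Measure.restrict_apply_le _ _).trans (by simp)) (zero_le ..)
  calc (∫⁻ x in Set.Ioo 0 a, ENNReal.ofReal ((deriv (stepv a lam) x)^2))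
      = ∫⁻ _ in Set.Ioo 0 a, 0 := by
        refine lintegral_congr_ae ?_
        filter_upwards [hae] with x hx
        simp [stepv_deriv_eq_zero a lam hx]
    _ = 0 := lintegral_zero


lemma energy_affine (a lam : ℝ) :
    msEnergy a (fun x => lam * x) ∅ = ENNReal.ofReal (lam^2) * ENNReal.ofReal a := by
  have hderiv : ∀ x : ℝ, deriv (fun y => lam * y) x = lam := fun x => by
    simpa using ((hasDerivAt_id x).const_mul lam).deriv
  simp [msEnergy, hderiv, Real.volume_Ioo]

/-- The affine function `u(x) = λx` is a Dirichlet minimizer of the one-dimensional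
Mumford–Shah functional on `(0,a)` iff `aλ² ≤ 1`. -/
theorem stmt3 (a lam : ℝ) (ha : 0 < a) (hlam : 0 < lam) :
    (∀ v S, msAdmissible a v S 0 (lam * a) →
        msEnergy a (fun x => lam * x) ∅ ≤ msEnergy a v S) ↔ a * lam^2 ≤ 1 := by
  constructor
  · intro hmin
    have hadm : msAdmissible a (stepv a lam) ({a/2} : Finset ℝ) 0 (lam * a) :=
      stepv_admissible a lam ha
    have hle := hmin (stepv a lam) ({a/2} : Finset ℝ) hadm
    rw [energy_affine] at hle
    have henergy : msEnergy a (stepv a lam) ({a/2} : Finset ℝ) = 1 := by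
      rw [msEnergy, stepv_lintegral a lam ha]
      simp
    rw [henergy, ← ENNReal.ofReal_mul (sq_nonneg lam), ← ENNReal.ofReal_one] at hle
    have := (ENNReal.ofReal_le_ofReal_iff zero_le_one).mp hle
    linarith [this]
  · intro hle v S hadm
    obtain ⟨hS, hdiff, hcont, h0, h1⟩ := hadm
    rw [energy_affine]
    by_cases hSe : S = ∅
    · subst hSe
      simp only [Finset.coe_empty, Set.diff_empty] at hdiff hcont
      rw [msEnergy]
      simp only [Finset.card_empty, Nat.cast_zero, add_zero]
      exact key_lemma a lam ha hlam v hdiff hcont h0 h1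
    · have hcard : (1:ℝ≥0∞) ≤ S.card := by
        have := Finset.card_pos.mpr (Finset.nonempty_of_ne_empty hSe)
        exact_mod_cast this
      calc ENNReal.ofReal (lam^2) * ENNReal.ofReal a
          = ENNReal.ofReal (a * lam^2) := by
            rw [← ENNReal.ofReal_mul (sq_nonneg lam), mul_comm]
        _ ≤ ENNReal.ofReal 1 := ENNReal.ofReal_le_ofReal hle
        _ = 1 := ENNReal.ofReal_one
        _ ≤ S.card := hcard
        _ ≤ msEnergy a v S := le_add_self
end

section
/- Let Ω ⊂ ℝ^n be open and bounded, and let u : Ω → ℝ be harmonic with m = inf u, M = sup u, and suppose (M − m)·sup_Ω |∇u| ≤ 1. Define the vectorfield φ on Ω × ℝ by φ(x,t) = (2∇u(x), |∇u(x)|²) if (u(x)+m)/2 ≤ t ≤ (u(x)+M)/2 and φ(x,t) = (0,0) otherwise. Then φ satisfies: (a) φ^t(x,t) ≥ (1/4)|φ^x(x,t)|² for all (x,t); (b) |∫_{t₁}^{t₂} φ^x(x,t) dt| ≤ 1 for all x ∈ Ω and t₁, t₂ ∈ ℝ; and (a') φ^x(x,u(x)) = 2∇u(x), φ^t(x,u(x))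 = |∇u(x)|². -/
open RealInnerProductSpace

/-- The calibration for a harmonic function `u` with small gradient:
the field `φ(x,t) = (2∇u(x), |∇u(x)|²)` for `(u(x)+m)/2 ≤ t ≤ (u(x)+M)/2` and
`φ = 0` otherwise satisfies the calibration conditions (a), (b), (a') for the
homogeneous Mumford–Shah functional. -/
theorem stmt5 (n : ℕ) (Ω : Set (EuclideanSpace ℝ (Fin n)))
    (hΩ : IsOpen Ω) (hΩb : Bornology.IsBounded Ω)
    (u : EuclideanSpace ℝ (Fin n) → ℝ)
    (gradU : EuclideanSpace ℝ (Fin n) → EuclideanSpace ℝ (Fin n))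
    (hgrad : ∀ x ∈ Ω, HasGradientAt u (gradU x) x)
    -- `u` is harmonic on `Ω` : the divergence of its gradient vanishes
    (hharm : ∀ x ∈ Ω, LinearMap.trace ℝ (EuclideanSpace ℝ (Fin n))
      ((fderiv ℝ gradU x : EuclideanSpace ℝ (Fin n) →L[ℝ] EuclideanSpace ℝ (Fin n)) :
        EuclideanSpace ℝ (Fin n) →ₗ[ℝ] EuclideanSpace ℝ (Fin n)) = 0)
    -- `u` and `∇u` are bounded on `Ω`
    (hub : BddAbove (u '' Ω)) (hlb : BddBelow (u '' Ω))
    (hgb : BddAbove ((fun x => ‖gradU x‖) '' Ω))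
    (m M : ℝ) (hm : m = sInf (u '' Ω)) (hM : M = sSup (u '' Ω))
    -- `osc u · sup |∇u| ≤ 1`
    (hosc : (M - m) * sSup ((fun x => ‖gradU x‖) '' Ω) ≤ 1)
    (φx : EuclideanSpace ℝ (Fin n) → ℝ → EuclideanSpace ℝ (Fin n))
    (φt : EuclideanSpace ℝ (Fin n) → ℝ → ℝ)
    (hφx : ∀ x t, φx x t =
      if (u x + m)/2 ≤ t ∧ t ≤ (u x + M)/2 then (2:ℝ) • gradU x else 0)
    (hφt : ∀ x t, φt x t =
      if (u x + m)/2 ≤ t ∧ t ≤ (u x + M)/2 then ‖gradU x‖^2 else 0) :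
    (∀ x ∈ Ω, ∀ t : ℝ, (1/4) * ‖φx x t‖^2 ≤ φt x t) ∧
    (∀ x ∈ Ω, ∀ t₁ t₂ : ℝ, ‖∫ t in t₁..t₂, φx x t‖ ≤ 1) ∧
    (∀ x ∈ Ω, φx x (u x) = (2:ℝ) • gradU x ∧ φt x (u x) = ‖gradU x‖^2) := by
  have key : ∀ x ∈ Ω, m ≤ u x ∧ u x ≤ M := fun x hx =>
    ⟨hm ▸ csInf_le hlb ⟨x, hx, rfl⟩, hM ▸ le_csSup hub ⟨x, hx, rfl⟩⟩
  refine ⟨?_, ?_, ?_⟩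
  · intro x hx t
    rw [hφx, hφt]
    split_ifs with h
    · rw [norm_smul]
      simp only [Real.norm_ofNat]
      nlinarith [norm_nonneg (gradU x)]
    · simp
  · intro x hx t₁ t₂
    set g := gradU x with hg
    set a := (u x + m)/2 with ha
    set b := (u x + M)/2 with hb
    have hfx : ∀ t, φx x t = Set.indicator (Set.Icc a b) (fun _ => (2:ℝ) • g) t := by
      intro t
      rw [hφx]
      by_cases h : a ≤ t ∧ t ≤ b
      · rw [if_pos h, Set.indicator_of_mem (Set.mem_Icc.2 h)]
      · rw [if_neg h, Set.indicator_of_notMem (fun hc => h (Set.mem_Icc.1 hc))]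
    have hS : ‖g‖ ≤ sSup ((fun x => ‖gradU x‖) '' Ω) := le_csSup hgb ⟨x, hx, rfl⟩
    have hMm : 0 ≤ M - m := by linarith [(key x hx).1, (key x hx).2]
    have hS0 : 0 ≤ sSup ((fun x => ‖gradU x‖) '' Ω) := le_trans (norm_nonneg g) hS
    have main : ∀ s t : ℝ, s ≤ t → ‖∫ r in s..t, φx x r‖ ≤ 1 := by
      intro s t hst
      rw [intervalIntegral.integral_of_le hst]
      calc ‖∫ r in Set.Ioc s t, φx x r‖
          ≤ ∫ r in Set.Ioc s t, ‖φx x r‖ :=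
            MeasureTheory.norm_integral_le_integral_norm _
        _ = ∫ r in Set.Ioc s t,
              Set.indicator (Set.Icc a b) (fun _ => ‖(2:ℝ) • g‖) r := by
            apply MeasureTheory.integral_congr_ae
            filter_upwards with r
            rw [hfx r, ← norm_indicator_eq_indicator_norm]
        _ = ∫ r in Set.Ioc s t ∩ Set.Icc a b, ‖(2:ℝ) • g‖ := by
            rw [MeasureTheory.setIntegral_indicator measurableSet_Icc]
        _ = (MeasureTheory.volume (Set.Ioc s t ∩ Set.Icc a b)).toReal * ‖(2:ℝ) • g‖ := by
            rw [MeasureTheory.setIntegral_const, smul_eq_mul, MeasureTheory.measureReal_def]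
        _ ≤ (b - a) * ‖(2:ℝ) • g‖ := by
            apply mul_le_mul_of_nonneg_right _ (norm_nonneg _)
            have h1 : MeasureTheory.volume (Set.Ioc s t ∩ Set.Icc a b)
                ≤ MeasureTheory.volume (Set.Icc a b) :=
              MeasureTheory.measure_mono Set.inter_subset_right
            rw [Real.volume_Icc] at h1
            have h2 := ENNReal.toReal_mono ENNReal.ofReal_ne_top h1
            rw [ENNReal.toReal_ofReal (by rw [ha, hb]; linarith)] at h2
            exact h2
        _ = (M - m) * ‖g‖ := by
            rw [norm_smul, Real.norm_ofNat, ha, hb]; ring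
        _ ≤ (M - m) * sSup ((fun x => ‖gradU x‖) '' Ω) :=
            mul_le_mul_of_nonneg_left hS hMm
        _ ≤ 1 := hosc
    rcases le_total t₁ t₂ with h | h
    · exact main t₁ t₂ h
    · rw [intervalIntegral.integral_symm, norm_neg]
      exact main t₂ t₁ h
  · intro x hx
    have h := key x hx
    have hcond : (u x + m)/2 ≤ u x ∧ u x ≤ (u x + M)/2 := by
      constructor <;> linarith [h.1, h.2]
    rw [hφx, hφt, if_pos hcond, if_pos hcond]
    exact ⟨rfl, rfl⟩
end

section
/- Let u be a C² function on an open set Ω ⊂ ℝ^n with m ≤ u ≤ M (m < M), and define on Ω × (m,M) the vectorfield φ(x,t) = (2 (t−m)/(u(x)−m) ∇u(x), ((t−m)/(u(x)−m))² |∇u(x)|²) for m < t < u(x), and φ(x,t) = (2 (M−t)/(M−u(x)) ∇u(x), ((M−t)/(M−u(x)))² |∇u(x)|²) for u(x) < t < M. If u is harmonic (Δu = 0) and m < u(x) < M for all x, then φ is divergence-free in the classical sense on the open set {(x,t) : m < t < u(x)} and on {(x,t) : u(x) < t < M}, i.e. div_x φ^x + ∂_t φ^t = 0 there. -/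
open InnerProductSpace

noncomputable abbrev E' (n : ℕ) := EuclideanSpace ℝ (Fin n)

lemma trace_smulRight_eq {n : ℕ} (c' : E' n →L[ℝ] ℝ) (b : E' n) :
    LinearMap.trace ℝ (E' n) ((c'.smulRight b : E' n →L[ℝ] E' n) : E' n →ₗ[ℝ] E' n) = c' b := by
  classical
  set B := (EuclideanSpace.basisFun (Fin n) ℝ).toBasis with hB
  rw [LinearMap.trace_eq_matrix_trace ℝ B]
  have hb : c' b = ∑ i, b i * c' (B i) := by
    conv_lhs => rw [← B.sum_repr b]
    rw [map_sum]
    simp [hB, OrthonormalBasis.coe_toBasis_repr_apply, EuclideanSpace.basisFun_repr, mul_comm]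
  rw [hb]
  simp [Matrix.trace, Matrix.diag, LinearMap.toMatrix_apply, hB,
    OrthonormalBasis.coe_toBasis_repr_apply, EuclideanSpace.basisFun_repr, mul_comm]

lemma trace_fderiv_aux {n : ℕ} (w g : E' n → E' n) (v : E' n → ℝ) (c₀ : ℝ) (x : E' n)
    (dv : E' n →L[ℝ] ℝ) (G : E' n →L[ℝ] E' n)
    (hv : HasFDerivAt v dv x) (hvx : v x ≠ 0) (hg : HasFDerivAt g G x)
    (hw : w =ᶠ[nhds x] fun y => (c₀ / v y) • g y) :
    LinearMap.trace ℝ (E' n) ((fderiv ℝ w x : E' n →L[ℝ] E' n) : E' n →ₗ[ℝ] E' n)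
      = (c₀ / v x) * LinearMap.trace ℝ (E' n) ((G : E' n →L[ℝ] E' n) : E' n →ₗ[ℝ] E' n)
        - c₀ / (v x)^2 * dv (g x) := by
  have hinv : HasFDerivAt (fun y => (v y)⁻¹) (-((v x)^2)⁻¹ • dv) x := by
    have := (hasFDerivAt_inv hvx).comp x hv
    exact this.congr_fderiv (by ext y; simp [mul_comm])
  have hc : HasFDerivAt (fun y => c₀ / v y) (c₀ • (-((v x)^2)⁻¹ • dv)) x := by
    simp only [div_eq_mul_inv]
    exact hinv.const_mul c₀
  have hsm : HasFDerivAt (fun y => (c₀ / v y) • g y)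
      ((c₀ / v x) • G + (c₀ • (-((v x)^2)⁻¹ • dv)).smulRight (g x)) x := hc.smul hg
  rw [hw.fderiv_eq, hsm.fderiv]
  push_cast [ContinuousLinearMap.coe_add, ContinuousLinearMap.coe_smul]
  rw [map_add, LinearMap.map_smul, trace_smulRight_eq]
  simp [smul_smul]
  ring

/-- The vectorfield obtained by fibrating `Ω × (m,M)` with the harmonic functions
`m + λ(u−m)` and `M + λ(u−M)` is divergence-free in the classical sense
on `{m < t < u(x)}` and on `{u(x) < t < M}`. -/
theorem stmt6 (n : ℕ) (Ω : Set (EuclideanSpace ℝ (Fin n))) (hΩ : IsOpen Ω)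
    (u : EuclideanSpace ℝ (Fin n) → ℝ)
    (gradU : EuclideanSpace ℝ (Fin n) → EuclideanSpace ℝ (Fin n))
    (m M : ℝ) (hmM : m < M)
    (hu : ContDiffOn ℝ 2 u Ω)
    (hgrad : ∀ x ∈ Ω, HasGradientAt u (gradU x) x)
    (hrange : ∀ x ∈ Ω, m < u x ∧ u x < M)
    -- `u` is harmonic on `Ω`
    (hharm : ∀ x ∈ Ω, LinearMap.trace ℝ (EuclideanSpace ℝ (Fin n))
      ((fderiv ℝ gradU x : EuclideanSpace ℝ (Fin n) →L[ℝ] EuclideanSpace ℝ (Fin n)) :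
        EuclideanSpace ℝ (Fin n) →ₗ[ℝ] EuclideanSpace ℝ (Fin n)) = 0)
    (φx : EuclideanSpace ℝ (Fin n) → ℝ → EuclideanSpace ℝ (Fin n))
    (φt : EuclideanSpace ℝ (Fin n) → ℝ → ℝ)
    (hφ₁ : ∀ x ∈ Ω, ∀ t : ℝ, m < t → t < u x →
      φx x t = (2 * (t - m) / (u x - m)) • gradU x ∧
      φt x t = ((t - m) / (u x - m))^2 * ‖gradU x‖^2)
    (hφ₂ : ∀ x ∈ Ω, ∀ t : ℝ, u x < t → t < M →
      φx x t = (2 * (M - t) / (M - u x)) • gradU x ∧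
      φt x t = ((M - t) / (M - u x))^2 * ‖gradU x‖^2) :
    ∀ x ∈ Ω, ∀ t : ℝ, ((m < t ∧ t < u x) ∨ (u x < t ∧ t < M)) →
      LinearMap.trace ℝ (EuclideanSpace ℝ (Fin n))
        ((fderiv ℝ (fun y => φx y t) x :
          EuclideanSpace ℝ (Fin n) →L[ℝ] EuclideanSpace ℝ (Fin n)) :
          EuclideanSpace ℝ (Fin n) →ₗ[ℝ] EuclideanSpace ℝ (Fin n))
        + deriv (fun s => φt x s) t = 0 := by
  classical
  have hgd : ∀ x ∈ Ω, DifferentiableAt ℝ gradU x := by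
    intro x hx
    have h1 : ContDiffAt ℝ 2 u x := hu.contDiffAt (hΩ.mem_nhds hx)
    have h2 : ContDiffAt ℝ 1 (fderiv ℝ u) x := h1.fderiv_right (by norm_num)
    have h3 : DifferentiableAt ℝ
        (fun y => (toDual ℝ (E' n)).symm (fderiv ℝ u y)) x :=
      ((toDual ℝ (E' n)).symm.toContinuousLinearEquiv.toContinuousLinearMap.differentiableAt).comp
        x (h2.differentiableAt (by norm_num))
    have heq : (fun y => (toDual ℝ (E' n)).symm (fderiv ℝ u y)) =ᶠ[nhds x] gradU := by
      filter_upwards [hΩ.mem_nhds hx] with y hy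
      rw [(hgrad y hy).hasFDerivAt.fderiv]
      simp
    exact heq.differentiableAt_iff.mp h3
  intro x hx t ht
  have hdu : HasFDerivAt u (toDual ℝ (E' n) (gradU x)) x := (hgrad x hx).hasFDerivAt
  have hcont : ContinuousAt u x := hdu.differentiableAt.continuousAt
  have hG : HasFDerivAt gradU (fderiv ℝ gradU x) x := (hgd x hx).hasFDerivAt
  rcases ht with ⟨h1, h2⟩ | ⟨h1, h2⟩
  · have ha : u x - m ≠ 0 := by linarith
    have hnear : ∀ᶠ y in nhds x, y ∈ Ω ∧ t < u y := by
      have h' : ∀ᶠ y in nhds x, u y ∈ Set.Ioi t :=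
        hcont.preimage_mem_nhds (isOpen_Ioi.mem_nhds h2)
      filter_upwards [hΩ.mem_nhds hx, h'] with y hy hy' using ⟨hy, hy'⟩
    have hw : (fun y => φx y t) =ᶠ[nhds x]
        fun y => ((2 * (t - m)) / (u y - m)) • gradU y := by
      filter_upwards [hnear] with y hy
      exact (hφ₁ y hy.1 t h1 hy.2).1
    have hsub : HasFDerivAt (fun y => u y - m) (toDual ℝ (E' n) (gradU x)) x :=
      hdu.sub_const m
    have htr := trace_fderiv_aux (fun y => φx y t) gradU (fun y => u y - m)
      (2 * (t - m)) x _ _ hsub ha hG hw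
    rw [htr, hharm x hx]
    have hd : deriv (fun s => φt x s) t = 2 * (t - m) / (u x - m)^2 * ‖gradU x‖^2 := by
      have hev : (fun s => φt x s) =ᶠ[nhds t]
          fun s => ((s - m) / (u x - m))^2 * ‖gradU x‖^2 := by
        filter_upwards [Ioo_mem_nhds h1 h2] with s hs
        exact (hφ₁ x hx s hs.1 hs.2).2
      rw [hev.deriv_eq]
      have h0 : HasDerivAt (fun s : ℝ => (s - m) / (u x - m)) (1 / (u x - m)) t :=
        ((hasDerivAt_id t).sub_const m).div_const _
      have h3 := (h0.pow 2).mul_const (‖gradU x‖^2)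
      rw [show deriv (fun s => ((s - m) / (u x - m)) ^ 2 * ‖gradU x‖ ^ 2) t = _ from h3.deriv]
      field_simp
      simp only [Nat.add_one_sub_one, pow_one]
      field_simp
      push_cast
      ring
    rw [hd]
    simp only [toDual_apply_apply, real_inner_self_eq_norm_sq]
    ring
  · have hM : u x < M := (hrange x hx).2
    have ha : M - u x ≠ 0 := by linarith
    have hnear : ∀ᶠ y in nhds x, y ∈ Ω ∧ u y < t := by
      have h' : ∀ᶠ y in nhds x, u y ∈ Set.Iio t :=
        hcont.preimage_mem_nhds (isOpen_Iio.mem_nhds h1)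
      filter_upwards [hΩ.mem_nhds hx, h'] with y hy hy' using ⟨hy, hy'⟩
    have hw : (fun y => φx y t) =ᶠ[nhds x]
        fun y => ((2 * (M - t)) / (M - u y)) • gradU y := by
      filter_upwards [hnear] with y hy
      exact (hφ₂ y hy.1 t hy.2 h2).1
    have hsub : HasFDerivAt (fun y => M - u y) (-(toDual ℝ (E' n) (gradU x))) x :=
      hdu.const_sub M
    have htr := trace_fderiv_aux (fun y => φx y t) gradU (fun y => M - u y)
      (2 * (M - t)) x _ _ hsub ha hG hw
    rw [htr, hharm x hx]
    have hd : deriv (fun s => φt x s) t = -(2 * (M - t) / (M - u x)^2 * ‖gradU x‖^2) := by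
      have hev : (fun s => φt x s) =ᶠ[nhds t]
          fun s => ((M - s) / (M - u x))^2 * ‖gradU x‖^2 := by
        filter_upwards [Ioo_mem_nhds h1 h2] with s hs
        exact (hφ₂ x hx s hs.1 hs.2).2
      rw [hev.deriv_eq]
      have h0 : HasDerivAt (fun s : ℝ => (M - s) / (M - u x)) (-1 / (M - u x)) t :=
        ((hasDerivAt_id t).const_sub M).div_const _
      have h3 := (h0.pow 2).mul_const (‖gradU x‖^2)
      rw [show deriv (fun s => ((M - s) / (M - u x)) ^ 2 * ‖gradU x‖ ^ 2) t = _ from h3.deriv]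
      field_simp
      simp only [Nat.add_one_sub_one, pow_one]
      field_simp
      push_cast
      ring
    rw [hd]
    simp only [ContinuousLinearMap.neg_apply, toDual_apply_apply, real_inner_self_eq_norm_sq]
    ring
end

section
/- Let Ω ⊂ ℝ^n be open, A ⊂ Ω × ℝ open, and let u : Ω × Λ → ℝ (Λ ⊂ ℝ an open interval) be a C² function such that each u_λ := u(·,λ) is harmonic in x, ∂_λ u(x,λ) ≠ 0 everywhere, and the map (x,λ) ↦ (x, u(x,λ)) is a C¹ diffeomorphism onto A with inverse (x,t) ↦ (x, λ(x,t)). Then the vectorfield φ(x,t) := (2∇_x u(x,λ(x,t)), |∇_x u(x,λ(x,t))|²) is divergence-free in A, i.e. div_x φ^x + ∂_t φ^t = 0 in A. -/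
open scoped RealInnerProductSpace

lemma trace_smulRight_aux {E : Type*} [NormedAddCommGroup E] [InnerProductSpace ℝ E]
    [FiniteDimensional ℝ E] (ℓ : E →ₗ[ℝ] ℝ) (b : E) :
    LinearMap.trace ℝ E (ℓ.smulRight b) = ℓ b := by
  have h := LinearMap.trace_comp_comm' (LinearMap.toSpanSingleton ℝ E b) ℓ
  have h1 : (LinearMap.toSpanSingleton ℝ E b).comp ℓ = ℓ.smulRight b := by
    ext v; simp [LinearMap.toSpanSingleton_apply]
  have h2 : ℓ.comp (LinearMap.toSpanSingleton ℝ E b) = (ℓ b) • LinearMap.id := by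
    ext; simp [LinearMap.toSpanSingleton_apply, mul_comm]
  rw [h1, h2, map_smul, LinearMap.trace_id] at h
  simp at h ⊢


set_option maxHeartbeats 1000000 in
/-- A fibration of an open set `A ⊂ Ω × ℝ` by graphs of a `C²` family of harmonic
functions `u_λ` gives rise to the divergence-free vectorfield
`φ(x,t) = (2∇ₓu(x,λ(x,t)), |∇ₓu(x,λ(x,t))|²)`. -/
theorem stmt7 (n : ℕ) (Ω : Set (EuclideanSpace ℝ (Fin n))) (hΩ : IsOpen Ω)
    (Λ : Set ℝ) (hΛopen : IsOpen Λ) (hΛint : Λ.OrdConnected)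
    (A : Set (EuclideanSpace ℝ (Fin n) × ℝ)) (hA : IsOpen A)
    (hAΩ : A ⊆ Ω ×ˢ (Set.univ : Set ℝ))
    (u : EuclideanSpace ℝ (Fin n) → ℝ → ℝ)
    (gradU : EuclideanSpace ℝ (Fin n) → ℝ → EuclideanSpace ℝ (Fin n))
    (lam : EuclideanSpace ℝ (Fin n) → ℝ → ℝ)
    -- `u` is `C²` in `(x,λ)`
    (hu : ContDiffOn ℝ 2 (fun p : EuclideanSpace ℝ (Fin n) × ℝ => u p.1 p.2) (Ω ×ˢ Λ))
    -- `gradU x λ` is the gradient in `x` of `u(·,λ)`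
    (hgrad : ∀ x ∈ Ω, ∀ l ∈ Λ, HasGradientAt (fun y => u y l) (gradU x l) x)
    -- each `u_λ` is harmonic in `x`
    (hharm : ∀ x ∈ Ω, ∀ l ∈ Λ, LinearMap.trace ℝ (EuclideanSpace ℝ (Fin n))
      ((fderiv ℝ (fun y => gradU y l) x :
        EuclideanSpace ℝ (Fin n) →L[ℝ] EuclideanSpace ℝ (Fin n)) :
        EuclideanSpace ℝ (Fin n) →ₗ[ℝ] EuclideanSpace ℝ (Fin n)) = 0)
    -- `∂_λ u ≠ 0` everywhere
    (hdl : ∀ x ∈ Ω, ∀ l ∈ Λ, deriv (fun s => u x s) l ≠ 0)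
    -- `(x,λ) ↦ (x, u(x,λ))` maps `Ω × Λ` onto `A`, with `C¹` inverse `(x,t) ↦ (x, λ(x,t))`
    (hinto : ∀ x ∈ Ω, ∀ l ∈ Λ, (x, u x l) ∈ A ∧ lam x (u x l) = l)
    (honto : ∀ p ∈ A, p.1 ∈ Ω ∧ lam p.1 p.2 ∈ Λ ∧ u p.1 (lam p.1 p.2) = p.2)
    (hlamC1 : ContDiffOn ℝ 1 (fun p : EuclideanSpace ℝ (Fin n) × ℝ => lam p.1 p.2) A) :
    ∀ p ∈ A,
      LinearMap.trace ℝ (EuclideanSpace ℝ (Fin n))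
        ((fderiv ℝ (fun y => (2:ℝ) • gradU y (lam y p.2)) p.1 :
          EuclideanSpace ℝ (Fin n) →L[ℝ] EuclideanSpace ℝ (Fin n)) :
          EuclideanSpace ℝ (Fin n) →ₗ[ℝ] EuclideanSpace ℝ (Fin n))
      + deriv (fun s => ‖gradU p.1 (lam p.1 s)‖^2) p.2 = 0 := by
  let EE := EuclideanSpace ℝ (Fin n)
  classical
  intro p hp
  obtain ⟨hx, hl, hul⟩ := honto p hp
  set x₀ : EE := p.1 with hx₀
  set t₀ : ℝ := p.2 with ht₀
  set l₀ : ℝ := lam x₀ t₀ with hl₀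
  have hq₀ : ((x₀, l₀) : EE × ℝ) ∈ Ω ×ˢ Λ := ⟨hx, hl⟩
  have hOL : IsOpen (Ω ×ˢ Λ) := hΩ.prod hΛopen
  set F : EE × ℝ → ℝ := fun q => u q.1 q.2 with hF
  have hFd : DifferentiableAt ℝ F (x₀, l₀) :=
    ((hu.contDiffAt (hOL.mem_nhds hq₀)).differentiableAt (by norm_num))
  set D₀ : (EE × ℝ) →L[ℝ] ℝ := fderiv ℝ F (x₀, l₀) with hD₀
  set g : EE := gradU x₀ l₀ with hg
  have hgrad0 : HasGradientAt (fun y => u y l₀) g x₀ := hgrad _ hx _ hl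
  have hcompl : HasFDerivAt (fun y : EE => u y l₀)
      (D₀.comp (ContinuousLinearMap.inl ℝ EE ℝ)) x₀ :=
    by have h := hFd.hasFDerivAt.comp x₀ (hasFDerivAt_prodMk_left (𝕜 := ℝ) x₀ l₀); exact h
  have hD₀inl : D₀.comp (ContinuousLinearMap.inl ℝ EE ℝ)
      = (InnerProductSpace.toDual ℝ EE) g :=
    hcompl.unique hgrad0.hasFDerivAt
  have hD₀v : ∀ v : EE, D₀ (v, 0) = ⟪g, v⟫ := by
    intro v
    have h := congrArg (fun T : EE →L[ℝ] ℝ => T v) hD₀inl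
    simpa [InnerProductSpace.toDual_apply_apply] using h
  set a : ℝ := D₀ (0, 1) with ha
  have hderiva : HasDerivAt (fun s => u x₀ s) a l₀ := by
    have h := (hFd.hasFDerivAt.comp l₀ (hasFDerivAt_prodMk_right (𝕜 := ℝ) x₀ l₀)).hasDerivAt
    exact h
  have hane : a ≠ 0 := by
    have h := hdl _ hx _ hl
    rw [hderiva.deriv] at h
    exact h
  -- the gradient field `G` and its differentiability
  set G : EE × ℝ → EE := fun q => gradU q.1 q.2 with hG
  set H : EE × ℝ → EE := fun q => (InnerProductSpace.toDual ℝ EE).symm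
      ((fderiv ℝ F q).comp (ContinuousLinearMap.inl ℝ EE ℝ)) with hH
  have hHC1 : ContDiffOn ℝ 1 H (Ω ×ˢ Λ) := by
    have hf' : ContDiffOn ℝ 1 (fun q => fderiv ℝ F q) (Ω ×ˢ Λ) :=
      hu.fderiv_of_isOpen (m := 1) hOL (by norm_num)
    have hT : ContDiff ℝ 1 (fun T : (EE × ℝ) →L[ℝ] ℝ =>
        T.comp (ContinuousLinearMap.inl ℝ EE ℝ)) :=
      ((ContinuousLinearMap.compL ℝ EE (EE × ℝ) ℝ).flip
        (ContinuousLinearMap.inl ℝ EE ℝ)).contDiff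
    have hsymm : ContDiff ℝ 1 (fun w : EE →L[ℝ] ℝ =>
        (InnerProductSpace.toDual ℝ EE).symm w) :=
      (InnerProductSpace.toDual ℝ EE).symm.contDiff
    exact hsymm.comp_contDiffOn (hT.comp_contDiffOn hf')
  have hGH : Set.EqOn G H (Ω ×ˢ Λ) := by
    intro q hq
    have hFdq : DifferentiableAt ℝ F q :=
      ((hu.contDiffAt (hOL.mem_nhds hq)).differentiableAt (by norm_num))
    have hcq : HasFDerivAt (fun y : EE => u y q.2)
        ((fderiv ℝ F q).comp (ContinuousLinearMap.inl ℝ EE ℝ)) q.1 :=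
      by have h := hFdq.hasFDerivAt.comp q.1 (hasFDerivAt_prodMk_left (𝕜 := ℝ) q.1 q.2); exact h
    have huniq : (fderiv ℝ F q).comp (ContinuousLinearMap.inl ℝ EE ℝ)
        = (InnerProductSpace.toDual ℝ EE) (gradU q.1 q.2) :=
      hcq.unique (hgrad _ hq.1 _ hq.2).hasFDerivAt
    simp only [hG, hH, huniq, LinearIsometryEquiv.symm_apply_apply]
  have hGHev : G =ᶠ[nhds ((x₀, l₀) : EE × ℝ)] H :=
    Filter.eventuallyEq_of_mem (hOL.mem_nhds hq₀) hGH
  have hHdiff : DifferentiableAt ℝ H (x₀, l₀) :=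
    (hHC1.contDiffAt (hOL.mem_nhds hq₀)).differentiableAt (by norm_num)
  have hGdiff : DifferentiableAt ℝ G (x₀, l₀) := hHdiff.congr_of_eventuallyEq hGHev
  set DG : (EE × ℝ) →L[ℝ] EE := fderiv ℝ G (x₀, l₀) with hDG
  set b : EE := DG (0, 1) with hb
  -- differentiability of `lam` at `p`
  have hlamdiff : DifferentiableAt ℝ (fun q : EE × ℝ => lam q.1 q.2) p :=
    (hlamC1.contDiffAt (hA.mem_nhds hp)).differentiableAt (by norm_num)
  set L : (EE × ℝ) →L[ℝ] ℝ := fderiv ℝ (fun q : EE × ℝ => lam q.1 q.2) p with hL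
  set ℓ : EE →L[ℝ] ℝ := L.comp (ContinuousLinearMap.inl ℝ EE ℝ) with hℓ
  set m : ℝ := L (0, 1) with hm
  have hlamx : HasFDerivAt (fun y : EE => lam y t₀) ℓ x₀ :=
    by have h := hlamdiff.hasFDerivAt.comp x₀ (hasFDerivAt_prodMk_left (𝕜 := ℝ) x₀ t₀); exact h
  have hlamt : HasDerivAt (fun s : ℝ => lam x₀ s) m t₀ := by
    have h := (hlamdiff.hasFDerivAt.comp t₀ (hasFDerivAt_prodMk_right (𝕜 := ℝ) x₀ t₀)).hasDerivAt
    exact h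
  -- derivative of `λ ↦ gradU x₀ λ`
  have hbl : HasDerivAt (fun l : ℝ => gradU x₀ l) b l₀ := by
    have h := (hGdiff.hasFDerivAt.comp l₀ (hasFDerivAt_prodMk_right (𝕜 := ℝ) x₀ l₀)).hasDerivAt
    exact h
  -- the trace of `fderiv (fun y => gradU y l₀)` vanishes
  have hharm0 : LinearMap.trace ℝ EE
      ((DG.comp (ContinuousLinearMap.inl ℝ EE ℝ) : EE →L[ℝ] EE) : EE →ₗ[ℝ] EE) = 0 := by
    have hc : HasFDerivAt (fun y : EE => gradU y l₀)
        (DG.comp (ContinuousLinearMap.inl ℝ EE ℝ)) x₀ :=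
      by have h := hGdiff.hasFDerivAt.comp x₀ (hasFDerivAt_prodMk_left (𝕜 := ℝ) x₀ l₀); exact h
    have h := hharm _ hx _ hl
    rw [hc.fderiv] at h
    exact h
  -- the `x`-part of the divergence
  have hmap : HasFDerivAt (fun y : EE => ((y, lam y t₀) : EE × ℝ))
      ((ContinuousLinearMap.id ℝ EE).prod ℓ) x₀ := (hasFDerivAt_id x₀).prodMk hlamx
  have hGc : HasFDerivAt (fun y : EE => gradU y (lam y t₀))
      (DG.comp ((ContinuousLinearMap.id ℝ EE).prod ℓ)) x₀ :=
    by have h := hGdiff.hasFDerivAt.comp x₀ hmap; exact h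
  have h2G : HasFDerivAt (fun y : EE => (2:ℝ) • gradU y (lam y t₀))
      ((2:ℝ) • DG.comp ((ContinuousLinearMap.id ℝ EE).prod ℓ)) x₀ := hGc.const_smul (2:ℝ)
  have hdecomp : DG.comp ((ContinuousLinearMap.id ℝ EE).prod ℓ)
      = DG.comp (ContinuousLinearMap.inl ℝ EE ℝ) + ℓ.smulRight b := by
    ext v
    have hsplit : ((v, ℓ v) : EE × ℝ) = (v, 0) + (ℓ v) • ((0 : EE), (1 : ℝ)) := by
      simp
    simp only [ContinuousLinearMap.comp_apply, ContinuousLinearMap.prod_apply,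
      ContinuousLinearMap.coe_id', id_eq, ContinuousLinearMap.add_apply,
      ContinuousLinearMap.smulRight_apply, ContinuousLinearMap.inl_apply, hb]
    rw [hsplit, map_add, map_smul]
  have htrace : LinearMap.trace ℝ EE
      ((fderiv ℝ (fun y => (2:ℝ) • gradU y (lam y t₀)) x₀ : EE →L[ℝ] EE) : EE →ₗ[ℝ] EE)
      = 2 * (ℓ b) := by
    rw [h2G.fderiv, hdecomp]
    have e1 : ((((2:ℝ) • (DG.comp (ContinuousLinearMap.inl ℝ EE ℝ) + ℓ.smulRight b)) :
        EE →L[ℝ] EE) : EE →ₗ[ℝ] EE)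
        = (2:ℝ) • (((DG.comp (ContinuousLinearMap.inl ℝ EE ℝ) : EE →L[ℝ] EE) : EE →ₗ[ℝ] EE)
          + ((ℓ.smulRight b : EE →L[ℝ] EE) : EE →ₗ[ℝ] EE)) := by
      rfl
    rw [e1, map_smul, map_add, hharm0]
    have e2 : ((ℓ.smulRight b : EE →L[ℝ] EE) : EE →ₗ[ℝ] EE)
        = (ℓ : EE →ₗ[ℝ] ℝ).smulRight b := rfl
    rw [e2, trace_smulRight_aux]
    simp [smul_eq_mul]
  -- the `t`-part of the divergence
  set w : ℝ → EuclideanSpace ℝ (Fin n) := fun s => gradU x₀ (lam x₀ s) with hw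
  have hwd : HasDerivAt w (m • b) t₀ := by
    have h1 : HasDerivAt (fun s : ℝ => ((x₀, lam x₀ s) : EE × ℝ)) (0, m) t₀ :=
      (hasDerivAt_const t₀ x₀).prodMk hlamt
    have h2 := hGdiff.hasFDerivAt.comp_hasDerivAt t₀ h1
    have h3 : DG ((0 : EE), m) = m • b := by
      rw [show (((0 : EE), m) : EE × ℝ) = m • ((0 : EE), (1 : ℝ)) by simp, map_smul]
    rw [h3] at h2
    exact h2
  have hInner : HasDerivAt (fun s => ⟪w s, w s⟫) (⟪w t₀, m • b⟫ + ⟪m • b, w t₀⟫) t₀ :=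
    HasDerivAt.inner (𝕜 := ℝ) hwd hwd
  have hwt : w t₀ = g := rfl
  have hderivT : deriv (fun s => ‖gradU x₀ (lam x₀ s)‖ ^ 2) t₀ = 2 * (m * ⟪g, b⟫) := by
    have heq : (fun s => ‖gradU x₀ (lam x₀ s)‖ ^ 2) = fun s => ⟪w s, w s⟫ := by
      funext s
      rw [real_inner_self_eq_norm_sq]
    rw [heq, hInner.deriv, hwt, real_inner_smul_right, real_inner_smul_left,
      real_inner_comm b g]
    ring
  -- the identities coming from `u (x, lam x t) = t`
  have hΦ : HasFDerivAt (fun q : EE × ℝ => u q.1 (lam q.1 q.2))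
      (D₀.comp ((ContinuousLinearMap.fst ℝ EE ℝ).prod L)) p := by
    have hin : HasFDerivAt (fun q : EE × ℝ => ((q.1, lam q.1 q.2) : EE × ℝ))
        ((ContinuousLinearMap.fst ℝ EE ℝ).prod L) p :=
      (hasFDerivAt_fst).prodMk hlamdiff.hasFDerivAt
    exact hFd.hasFDerivAt.comp p hin
  have hΦA : (fun q : EE × ℝ => u q.1 (lam q.1 q.2)) =ᶠ[nhds p] (fun q : EE × ℝ => q.2) :=
    Filter.eventuallyEq_of_mem (hA.mem_nhds hp) (fun q hq => (honto q hq).2.2)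
  have hsnd : D₀.comp ((ContinuousLinearMap.fst ℝ EE ℝ).prod L)
      = ContinuousLinearMap.snd ℝ EE ℝ := by
    have h2 := hΦA.fderiv_eq (𝕜 := ℝ)
    rw [hΦ.fderiv] at h2
    rw [h2]
    exact (hasFDerivAt_snd).fderiv
  have key1 : ⟪g, b⟫ + (ℓ b) * a = 0 := by
    have h := congrArg (fun T : (EE × ℝ) →L[ℝ] ℝ => T (b, 0)) hsnd
    simp only [ContinuousLinearMap.comp_apply, ContinuousLinearMap.prod_apply,
      ContinuousLinearMap.coe_fst', ContinuousLinearMap.coe_snd'] at h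
    have hsplit : ((b, L (b, 0)) : EE × ℝ) = (b, 0) + (L (b, 0)) • ((0 : EE), (1 : ℝ)) := by
      simp
    rw [hsplit, map_add, map_smul] at h
    have hlb : ℓ b = L (b, 0) := by
      simp [hℓ]
    rw [hD₀v b] at h
    rw [hlb]
    simpa [smul_eq_mul, mul_comm] using h
  have key2 : m * a = 1 := by
    have h := congrArg (fun T : (EE × ℝ) →L[ℝ] ℝ => T ((0 : EE), (1 : ℝ))) hsnd
    simp only [ContinuousLinearMap.comp_apply, ContinuousLinearMap.prod_apply,
      ContinuousLinearMap.coe_fst', ContinuousLinearMap.coe_snd'] at h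
    have hsplit : (((0 : EE), L ((0 : EE), (1 : ℝ))) : EE × ℝ)
        = (L ((0 : EE), (1 : ℝ))) • ((0 : EE), (1 : ℝ)) := by
      simp
    rw [hsplit, map_smul] at h
    simpa [hm, smul_eq_mul, mul_comm] using h
  rw [htrace, hderivT]
  linear_combination (2 * m) * key1 - (2 * ℓ b) * key2
end
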